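/- Fix an integer e ≥ 1. For each n ≥ 0, the set Iₙ is an ideal of R̃e(k); the quotient Iₙ/Iₙ₊₁ is a free W(k)-module of rank one, generated by the class of Tⁿ/(⌊n/e⌋)!; and for every n ≥ 1 the Frobenius lift Φ maps Iₙ into I_{pn}, hence into Iₙ₊₁. -/

import Mathlib

/-!
Piano rings (A. Vasiu, "Shimura varieties and the Mumford–Tate conjecture", §2.1).

`W(k)` is the ring of `p`-typical Witt vectors of a perfect field `k` of characteristic `p`,
`B(k) = W(k)[1/p]` its fraction field.  For `e ≥ 1`, the piano ring `R̃e(k)` of resonance `e`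
consists of the power series `Σ aₙ Tⁿ ∈ B(k)[[T]]` with `aₙ ⬝ (⌊n/e⌋)! ∈ W(k)` for all `n`,
and the piano ring `Re(k)` of convergent resonance `e` consists of those for which moreover
`bₙ := aₙ ⬝ (⌊n/e⌋)!` converges `p`-adically to `0`.
-/

noncomputable section

open PowerSeries

variable (p : ℕ) [Fact p.Prime] (k : Type*) [Field k] [CharP k p] [PerfectRing k p]

/-- `x` lies in the canonical image of `W(k)` inside `B(k)`. -/
def InW (x : FractionRing (WittVector p k)) : Prop :=
  ∃ w : WittVector p k,
    algebraMap (WittVector p k) (FractionRing (WittVector p k)) w = x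

/-- The piano ring `R̃e(k)` of resonance `e`: power series `Σ aₙ Tⁿ` over `B(k)` with
`aₙ ⬝ (⌊n/e⌋)! ∈ W(k)` for all `n`. -/
def pianoTilde (e : ℕ) : Set (PowerSeries (FractionRing (WittVector p k))) :=
  {f | ∀ n : ℕ,
    InW p k (PowerSeries.coeff n f * (Nat.factorial (n / e) : FractionRing (WittVector p k)))}

/-- The piano ring `Re(k)` of convergent resonance `e`: power series `Σ aₙ Tⁿ` over `B(k)`
with `bₙ := aₙ ⬝ (⌊n/e⌋)! ∈ W(k)` for all `n` and `bₙ → 0` `p`-adically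
(for every `m` eventually `bₙ ∈ pᵐ W(k)`). -/
def pianoR (e : ℕ) : Set (PowerSeries (FractionRing (WittVector p k))) :=
  {f | (∀ n : ℕ,
      InW p k (PowerSeries.coeff n f * (Nat.factorial (n / e) : FractionRing (WittVector p k)))) ∧
    ∀ m : ℕ, ∃ N : ℕ, ∀ n ≥ N, ∃ w : WittVector p k,
      algebraMap (WittVector p k) (FractionRing (WittVector p k)) ((p : WittVector p k) ^ m * w)
        = PowerSeries.coeff n f * (Nat.factorial (n / e) : FractionRing (WittVector p k))}

/-- The Frobenius automorphism `σ` of `W(k)` extended to `B(k)`. -/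
def sigmaB : FractionRing (WittVector p k) ≃+* FractionRing (WittVector p k) :=
  IsFractionRing.ringEquivOfRingEquiv (WittVector.frobeniusEquiv p k)

/-- The `σ`-semilinear substitution `F : Σ aₙ Tⁿ ↦ Σ σ(aₙ) T^{pn}` on `B(k)[[T]]`. -/
def Fmap (f : PowerSeries (FractionRing (WittVector p k))) :
    PowerSeries (FractionRing (WittVector p k)) :=
  PowerSeries.mk fun n => if p ∣ n then sigmaB p k (PowerSeries.coeff (n / p) f) else 0

/-- `Iₙ`: the power series in `R̃e(k)` whose coefficients `aₘ` vanish for `m < n`. -/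
def Iset (e n : ℕ) : Set (PowerSeries (FractionRing (WittVector p k))) :=
  {f ∈ pianoTilde p k e | ∀ m < n, PowerSeries.coeff m f = 0}

/-- The element `Tⁿ/(⌊n/e⌋)!` of `B(k)[[T]]`. -/
def genI (e n : ℕ) : PowerSeries (FractionRing (WittVector p k)) :=
  PowerSeries.C
      ((Nat.factorial (n / e) : FractionRing (WittVector p k))⁻¹)
    * PowerSeries.X ^ n

/-!
Write `b_n(f) = a_n(f) ⬝ (⌊n/e⌋)!`.  Since `(⌊i/e⌋)! (⌊j/e⌋)!` divides `(⌊(i+j)/e⌋)!`, the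
coefficient `b_n(fg)` is a `ℕ`-linear combination of the products `b_i(f) b_j(g)`, so `R̃e(k)`
is a ring, and `Iₙ = R̃e(k) ∩ Tⁿ B(k)[[T]]` is an ideal of it.  An element of `Iₙ` lies in
`Iₙ₊₁` exactly when `b_n` vanishes, so `f ↦ b_n(f) ∈ W(k)` identifies `Iₙ/Iₙ₊₁` with `W(k)`,
the class of `Tⁿ/(⌊n/e⌋)!` going to `1`; here one needs `W(k)` to have characteristic zero.
Finally `b_{pq}(F f) = σ(b_q(f)) ⬝ (⌊pq/e⌋)!/(⌊q/e⌋)!`, so `F` preserves `R̃e(k)`, and it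
multiplies the `T`-adic order by `p`.
-/

open scoped Nat

theorem Nat.factorial_div_mul_factorial_div_dvd_factorial_add_div (e i j : ℕ) :
    (i / e)! * (j / e)! ∣ ((i + j) / e)! :=
  (Nat.factorial_mul_factorial_dvd_factorial_add _ _).trans
    (Nat.factorial_dvd_factorial Nat.div_add_div_le_add_div)

theorem PowerSeries.coeff_mul_mul_factorial_div_mem {R : Type*} [CommSemiring R]
    {S : Subsemiring R} {e : ℕ} {f g : R⟦X⟧}
    (hf : ∀ n, coeff n f * ((n / e)! : R) ∈ S) (hg : ∀ n, coeff n g * ((n / e)! : R) ∈ S)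
    (n : ℕ) : coeff n (f * g) * ((n / e)! : R) ∈ S := by
  rw [coeff_mul, Finset.sum_mul]
  refine S.sum_mem fun ij hij => ?_
  rw [Finset.HasAntidiagonal.mem_antidiagonal] at hij
  obtain ⟨d, hd⟩ := Nat.factorial_div_mul_factorial_div_dvd_factorial_add_div e ij.1 ij.2
  have hsplit : coeff ij.1 f * coeff ij.2 g * (((ij.1 + ij.2) / e)! : R) =
      coeff ij.1 f * ((ij.1 / e)! : R) * (coeff ij.2 g * ((ij.2 / e)! : R)) * d := by
    rw [hd]; push_cast; ring
  rw [← hij, hsplit]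
  exact S.mul_mem (S.mul_mem (hf _) (hg _)) (natCast_mem S d)

instance WittVector.instCharZero {q : ℕ} [Fact q.Prime] {R : Type*} [CommRing R] [IsDomain R]
    [CharP R q] : CharZero (WittVector q R) := by
  rcases CharP.char_is_prime_or_zero (WittVector q R) (ringChar (WittVector q R)) with hc | hc
  · have hcW : (ringChar (WittVector q R) : WittVector q R) = 0 := ringChar.Nat.cast_ringChar
    have hcR : (ringChar (WittVector q R) : R) = 0 := by
      rw [← map_natCast (WittVector.constantCoeff (p := q) (R := R)), hcW, map_zero]
    have hqc : q = ringChar (WittVector q R) :=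
      (Nat.prime_dvd_prime_iff_eq Fact.out hc).mp ((CharP.cast_eq_zero_iff R q _).mp hcR)
    rw [← hqc] at hcW
    exact absurd hcW (WittVector.p_nonzero q R)
  · exact (CharP.ringChar_zero_iff_CharZero _).mp hc

def pianoTildeSubring (e : ℕ) : Subring (FractionRing (WittVector p k))⟦X⟧ where
  carrier := pianoTilde p k e
  mul_mem' hf hg :=
    PowerSeries.coeff_mul_mul_factorial_div_mem (S := (algebraMap _ _).rangeS) hf hg
  one_mem' n := by
    rw [coeff_one]
    split_ifs with hn
    · subst hn; exact ⟨1, by simp⟩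
    · exact ⟨0, by simp⟩
  add_mem' hf hg n := by
    rw [map_add, add_mul]
    exact Subring.add_mem (algebraMap (WittVector p k) (FractionRing (WittVector p k))).range
      (hf n) (hg n)
  zero_mem' n := ⟨0, by simp⟩
  neg_mem' hf n := by
    rw [map_neg, neg_mul]
    exact Subring.neg_mem (algebraMap (WittVector p k) (FractionRing (WittVector p k))).range
      (hf n)

section Ideal

variable {p k}
omit [CharP k p] [PerfectRing k p]

variable {e n : ℕ} {f g : (FractionRing (WittVector p k))⟦X⟧}

theorem mem_Iset_iff : f ∈ Iset p k e n ↔ f ∈ pianoTilde p k e ∧ X ^ n ∣ f :=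
  and_congr_right' X_pow_dvd_iff.symm

theorem zero_mem_Iset : (0 : (FractionRing (WittVector p k))⟦X⟧) ∈ Iset p k e n :=
  mem_Iset_iff.2 ⟨(pianoTildeSubring p k e).zero_mem, dvd_zero _⟩

theorem add_mem_Iset (hf : f ∈ Iset p k e n) (hg : g ∈ Iset p k e n) : f + g ∈ Iset p k e n :=
  mem_Iset_iff.2 ⟨(pianoTildeSubring p k e).add_mem hf.1 hg.1,
    dvd_add (mem_Iset_iff.1 hf).2 (mem_Iset_iff.1 hg).2⟩

theorem neg_mem_Iset (hf : f ∈ Iset p k e n) : -f ∈ Iset p k e n :=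
  mem_Iset_iff.2 ⟨(pianoTildeSubring p k e).neg_mem hf.1, (dvd_neg).2 (mem_Iset_iff.1 hf).2⟩

theorem mul_mem_Iset (hf : f ∈ pianoTilde p k e) (hg : g ∈ Iset p k e n) :
    f * g ∈ Iset p k e n :=
  mem_Iset_iff.2 ⟨(pianoTildeSubring p k e).mul_mem hf hg.1, (mem_Iset_iff.1 hg).2.mul_left f⟩

theorem Iset_antitone : Antitone (Iset p k e) := fun _ _ hmn _ hf =>
  mem_Iset_iff.2 ⟨hf.1, (pow_dvd_pow X hmn).trans (mem_Iset_iff.1 hf).2⟩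

theorem mem_Iset_succ_iff (hf : f ∈ Iset p k e n) : f ∈ Iset p k e (n + 1) ↔ coeff n f = 0 :=
  ⟨fun hf' => hf'.2 n n.lt_succ_self, fun hn =>
    ⟨hf.1, fun m hm => (Nat.lt_succ_iff_lt_or_eq.1 hm).elim (hf.2 m) (· ▸ hn)⟩⟩

theorem C_algebraMap_mem_pianoTilde (w : WittVector p k) :
    C (algebraMap (WittVector p k) (FractionRing (WittVector p k)) w) ∈ pianoTilde p k e := by
  intro m
  rw [coeff_C]
  split_ifs with hm
  · subst hm; exact ⟨w, by simp⟩
  · exact ⟨0, by simp⟩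

end Ideal

section Graded

variable {p k}
omit [PerfectRing k p]

variable {e n : ℕ} {f : (FractionRing (WittVector p k))⟦X⟧}

theorem coeff_genI (m : ℕ) :
    coeff m (genI p k e n) =
      if m = n then ((n / e)! : FractionRing (WittVector p k))⁻¹ else 0 := by
  rw [genI, coeff_C_mul, coeff_X_pow]
  split_ifs <;> simp

theorem genI_mem_Iset : genI p k e n ∈ Iset p k e n := by
  refine mem_Iset_iff.2 ⟨fun m => ?_, dvd_mul_left _ _⟩
  rw [coeff_genI]
  split_ifs with hm
  · subst hm
    exact ⟨1, by rw [map_one, inv_mul_cancel₀ (Nat.cast_ne_zero.2 (Nat.factorial_ne_zero _))]⟩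
  · exact ⟨0, by simp⟩

theorem sub_C_mul_genI_mem_Iset_succ_iff (hf : f ∈ Iset p k e n) (w : WittVector p k) :
    f - C (algebraMap (WittVector p k) (FractionRing (WittVector p k)) w) * genI p k e n ∈
        Iset p k e (n + 1) ↔
      algebraMap (WittVector p k) (FractionRing (WittVector p k)) w = coeff n f * (n / e)! := by
  have hw : C (algebraMap (WittVector p k) _ w) * genI p k e n ∈ Iset p k e n :=
    mul_mem_Iset (C_algebraMap_mem_pianoTilde w) genI_mem_Iset
  have hfact : ((n / e)! : FractionRing (WittVector p k)) ≠ 0 :=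
    Nat.cast_ne_zero.2 (Nat.factorial_ne_zero _)
  rw [mem_Iset_succ_iff (sub_eq_add_neg f _ ▸ add_mem_Iset hf (neg_mem_Iset hw)), map_sub,
    coeff_C_mul, coeff_genI, if_pos rfl, sub_eq_zero, eq_mul_inv_iff_mul_eq₀ hfact, eq_comm]

theorem existsUnique_sub_C_mul_genI_mem_Iset_succ (hf : f ∈ Iset p k e n) :
    ∃! w : WittVector p k,
      f - C (algebraMap (WittVector p k) (FractionRing (WittVector p k)) w) * genI p k e n ∈
        Iset p k e (n + 1) := by
  simp_rw [sub_C_mul_genI_mem_Iset_succ_iff hf]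
  obtain ⟨w, hw⟩ := hf.1 n
  exact ⟨w, hw, fun v hv => IsFractionRing.injective _ _ (hv.trans hw.symm)⟩

end Graded

section Frobenius

variable {p k}
variable {e n : ℕ} {f : (FractionRing (WittVector p k))⟦X⟧}

theorem sigmaB_algebraMap (w : WittVector p k) :
    sigmaB p k (algebraMap (WittVector p k) _ w) =
      algebraMap (WittVector p k) _ (WittVector.frobeniusEquiv p k w) :=
  IsFractionRing.ringEquivOfRingEquiv_algebraMap _ _

theorem coeff_Fmap_mul (q : ℕ) : coeff (p * q) (Fmap p k f) = sigmaB p k (coeff q f) := by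
  simp [Fmap, (Fact.out : p.Prime).pos]

theorem coeff_Fmap_of_not_dvd {m : ℕ} (hm : ¬ p ∣ m) : coeff m (Fmap p k f) = 0 := by
  simp [Fmap, hm]

theorem Fmap_mem_pianoTilde (hf : f ∈ pianoTilde p k e) : Fmap p k f ∈ pianoTilde p k e := by
  intro m
  by_cases hm : p ∣ m
  · obtain ⟨q, rfl⟩ := hm
    obtain ⟨w, hw⟩ := hf q
    obtain ⟨d, hd⟩ : (q / e)! ∣ (p * q / e)! := Nat.factorial_dvd_factorial
      (Nat.div_le_div_right (Nat.le_mul_of_pos_left q (Fact.out : p.Prime).pos))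
    refine ⟨WittVector.frobeniusEquiv p k w * d, ?_⟩
    rw [coeff_Fmap_mul, hd, map_mul, ← sigmaB_algebraMap, hw, map_natCast, map_mul, map_natCast,
      Nat.cast_mul, mul_assoc]
  · rw [coeff_Fmap_of_not_dvd hm, zero_mul]
    exact ⟨0, map_zero _⟩

theorem Fmap_mem_Iset_mul (hf : f ∈ Iset p k e n) : Fmap p k f ∈ Iset p k e (p * n) := by
  refine ⟨Fmap_mem_pianoTilde hf.1, fun m hm => ?_⟩
  by_cases hpm : p ∣ m
  · obtain ⟨q, rfl⟩ := hpm
    rw [coeff_Fmap_mul, hf.2 q (Nat.lt_of_mul_lt_mul_left hm), map_zero]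
  · exact coeff_Fmap_of_not_dvd hpm

end Frobenius

theorem Iset_ideal_free_rank_one_frobenius (e : ℕ) :
    -- each `Iₙ` is an ideal of `R̃e(k)`:
    (∀ n : ℕ,
      (0 : PowerSeries (FractionRing (WittVector p k))) ∈ Iset p k e n ∧
      (∀ f ∈ Iset p k e n, ∀ g ∈ Iset p k e n, f + g ∈ Iset p k e n) ∧
      (∀ f ∈ Iset p k e n, -f ∈ Iset p k e n) ∧
      (∀ f ∈ pianoTilde p k e, ∀ g ∈ Iset p k e n, f * g ∈ Iset p k e n)) ∧
    -- `Iₙ/Iₙ₊₁` is free of rank one over `W(k)`, generated by the class of `Tⁿ/(⌊n/e⌋)!`: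
    (∀ n : ℕ,
      genI p k e n ∈ Iset p k e n ∧
      ∀ f ∈ Iset p k e n, ∃! w : WittVector p k,
        f - PowerSeries.C
              (algebraMap (WittVector p k) (FractionRing (WittVector p k)) w)
            * genI p k e n
          ∈ Iset p k e (n + 1)) ∧
    -- for `n ≥ 1`, `Φ` maps `Iₙ` into `I_{pn}`, hence into `Iₙ₊₁`:
    (∀ n : ℕ, 1 ≤ n → ∀ f ∈ Iset p k e n,
      Fmap p k f ∈ Iset p k e (p * n) ∧ Fmap p k f ∈ Iset p k e (n + 1)) := by
  refine ⟨fun n => ⟨zero_mem_Iset, fun f hf g hg => add_mem_Iset hf hg,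
      fun f hf => neg_mem_Iset hf, fun f hf g hg => mul_mem_Iset hf hg⟩,
    fun n => ⟨genI_mem_Iset, fun f hf => existsUnique_sub_C_mul_genI_mem_Iset_succ hf⟩,
    fun n hn f hf => ⟨Fmap_mem_Iset_mul hf, Iset_antitone ?_ (Fmap_mem_Iset_mul hf)⟩⟩
  have hp : 2 ≤ p := (Fact.out : p.Prime).two_le
  nlinarith
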